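/- arXiv:1206.3740 — 3 statements merged into one kernel-verified Lean document; each statement's English description precedes it below -/
import Mathlib

section
/- For every r ∈ ℕ there exists a constant C > 0, depending only on r, such that for all lifts f and g of orientation-preserving C^∞ circle diffeomorphisms, ‖f ∘ g − g‖_r ≤ C · ‖f − id‖_r · |g|_r^r. -/
noncomputable section
open MeasureTheory Filter Topology

/-- A lift of an orientation-preserving `C^∞` circle diffeomorphism: a `C^∞` map
`f : ℝ → ℝ` with `f (x+1) = f x + 1` and everywhere positive derivative. -/
def IsCircleDiffeoLift (f : ℝ → ℝ) : Prop :=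
  ContDiff ℝ (⊤ : ℕ∞) f ∧ (∀ x : ℝ, f (x + 1) = f x + 1) ∧ ∀ x : ℝ, 0 < deriv f x

/-- The `C^r` norm `‖φ‖_r = max_{0 ≤ i ≤ r} sup_x |φ^{(i)}(x)|`. -/
def CrNorm (r : ℕ) (φ : ℝ → ℝ) : ℝ :=
  (Finset.range (r + 1)).sup' (Finset.nonempty_range_iff.mpr r.succ_ne_zero)
    fun i => ⨆ x : ℝ, |iteratedDeriv i φ x|

/-- `d_r(f, g) = max {‖f - g‖_r, ‖f⁻¹ - g⁻¹‖_r}`. -/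
def liftDist (r : ℕ) (f g : ℝ → ℝ) : ℝ :=
  max (CrNorm r (fun x => f x - g x))
    (CrNorm r (fun x => Function.invFun f x - Function.invFun g x))

/-- `|f|_r = max {‖f - id‖_r, ‖f⁻¹ - id‖_r, 1}`. -/
def liftNorm (r : ℕ) (f : ℝ → ℝ) : ℝ :=
  max (max (CrNorm r (fun x => f x - x)) (CrNorm r (fun x => Function.invFun f x - x))) 1

/-- The lift `x ↦ x + a` of the rotation by `a`. -/
def RotLift (a : ℝ) : ℝ → ℝ := fun x => x + a

/-- The rotation number of the circle diffeomorphism induced by the lift `f` equals `a`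
(mod 1): the translation number `lim (fⁿ(0) - 0)/n` equals `a + k` for some integer `k`. -/
def HasRotationNumber (f : ℝ → ℝ) (a : ℝ) : Prop :=
  ∃ k : ℤ, Tendsto (fun n : ℕ => f^[n] 0 / (n : ℝ)) atTop (nhds (a + k))

/-- The lift of the `i`-th iterate (`i ∈ ℤ`) of the circle diffeomorphism induced by `f`. -/
def zpowLift (f : ℝ → ℝ) : ℤ → ℝ → ℝ := fun i =>
  if 0 ≤ i then f^[i.toNat] else (Function.invFun f)^[(-i).toNat]

/-- The ratio set of a circle diffeomorphism, described through the family `Fz i` of its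
iterates (`i ∈ ℤ`) and the family `D i` of the derivatives of its iterates: `t ≥ 0` lies in
the ratio set iff for every Borel `A` of positive Haar measure and every `ε > 0` there are a
Borel `B ⊆ A` of positive measure and `i ∈ ℤ` with `Fz i '' B ⊆ A` and `|D i x - t| < ε`
on `B`. -/
def ratioSet (Fz : ℤ → UnitAddCircle → UnitAddCircle) (D : ℤ → UnitAddCircle → ℝ) : Set ℝ :=
  {t : ℝ | 0 ≤ t ∧ ∀ A : Set UnitAddCircle, MeasurableSet A → 0 < volume A →
    ∀ ε : ℝ, 0 < ε → ∃ B : Set UnitAddCircle, MeasurableSet B ∧ B ⊆ A ∧ 0 < volume B ∧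
      ∃ i : ℤ, Fz i '' B ⊆ A ∧ ∀ x ∈ B, |D i x - t| < ε}

/-- A lift of an orientation-preserving `C¹` circle diffeomorphism. -/
def IsC1CircleLift (f : ℝ → ℝ) : Prop :=
  ContDiff ℝ 1 f ∧ (∀ x : ℝ, f (x + 1) = f x + 1) ∧ ∀ x : ℝ, 0 < deriv f x

/-!
`f ∘ g - g = φ ∘ g` with `φ = f - id`. Since `f` and `g` commute with `x ↦ x + 1`, the maps
`f - id` and `g - id` are 1-periodic, so all their derivatives are bounded and `‖·‖_r` is a genuine
supremum. Moreover `g' = 1 + (g - id)'` and `g⁽ⁱ⁾ = (g - id)⁽ⁱ⁾` for `i ≥ 2`, so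
`|g⁽ⁱ⁾| ≤ 2 |g|_r ≤ (2 |g|_r)ⁱ` for `1 ≤ i ≤ r`. The Faà di Bruno bound for the derivatives of a
composition then gives `|(φ ∘ g)⁽ⁿ⁾| ≤ n! ‖φ‖_r (2 |g|_r)ⁿ ≤ r! 2^r ‖φ‖_r |g|_r^r` for `n ≤ r`.
-/

open Function Set

lemma crNorm_nonneg (r : ℕ) (φ : ℝ → ℝ) : 0 ≤ CrNorm r φ :=
  Finset.le_sup'_of_le _ (Finset.mem_range.mpr r.succ_pos) (Real.iSup_nonneg fun _ => abs_nonneg _)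

/-- Without the boundedness hypothesis the supremum in `CrNorm` is the junk value `0`. -/
lemma abs_iteratedDeriv_le_crNorm_of_bddAbove {r i : ℕ} {φ : ℝ → ℝ} (hi : i ≤ r)
    (hb : BddAbove (range fun x => |iteratedDeriv i φ x|)) (x : ℝ) :
    |iteratedDeriv i φ x| ≤ CrNorm r φ :=
  (le_ciSup hb x).trans <| Finset.le_sup' (fun i => ⨆ x : ℝ, |iteratedDeriv i φ x|)
    (Finset.mem_range.mpr (Nat.lt_succ_of_le hi))

lemma crNorm_le {r : ℕ} {φ : ℝ → ℝ} {M : ℝ} (hM : 0 ≤ M)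
    (h : ∀ i ≤ r, ∀ x, |iteratedDeriv i φ x| ≤ M) : CrNorm r φ ≤ M :=
  Finset.sup'_le _ _ fun i hi =>
    Real.iSup_le (h i (Nat.lt_succ_iff.mp (Finset.mem_range.mp hi))) hM

lemma Function.Periodic.iteratedDeriv {φ : ℝ → ℝ} {c : ℝ} (h : Periodic φ c) (n : ℕ) :
    Periodic (_root_.iteratedDeriv n φ) c := fun x => by
  rw [← congrFun (iteratedDeriv_comp_add_const n φ c) x, show (fun z => φ (z + c)) = φ from funext h]

lemma Function.Periodic.bddAbove_range_abs_iteratedDeriv {φ : ℝ → ℝ} {c : ℝ} {n : ℕ}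
    (h : Periodic φ c) (hc : c ≠ 0) (hφ : ContDiff ℝ n φ) :
    BddAbove (range fun x => |_root_.iteratedDeriv n φ x|) :=
  (((h.iteratedDeriv n).comp abs).compact_of_continuous hc
    (hφ.continuous_iteratedDeriv n le_rfl).abs).bddAbove

lemma Function.Periodic.abs_iteratedDeriv_le_crNorm {φ : ℝ → ℝ} {c : ℝ} {r i : ℕ}
    (h : Periodic φ c) (hc : c ≠ 0) (hφ : ContDiff ℝ i φ) (hi : i ≤ r) (x : ℝ) :
    |_root_.iteratedDeriv i φ x| ≤ CrNorm r φ :=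
  abs_iteratedDeriv_le_crNorm_of_bddAbove hi (h.bddAbove_range_abs_iteratedDeriv hc hφ) x

lemma abs_iteratedDeriv_le_abs_iteratedDeriv_sub_id_add_one {g : ℝ → ℝ} {n : ℕ}
    (hg : ContDiff ℝ n g) (hn : n ≠ 0) (x : ℝ) :
    |iteratedDeriv n g x| ≤ |iteratedDeriv n (fun y => g y - y) x| + 1 := by
  have hid : |iteratedDeriv n id x| ≤ 1 := by
    rw [← iteratedDerivWithin_univ, iteratedDerivWithin_id (mem_univ x) uniqueDiffOn_univ,
      if_neg hn]
    split_ifs <;> simp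
  have hsplit := iteratedDeriv_fun_add (x := x) (hg.sub contDiff_id).contDiffAt
    (contDiff_id (𝕜 := ℝ)).contDiffAt
  simp only [id_eq, sub_add_cancel] at hsplit
  rw [hsplit]
  exact (abs_add_le _ _).trans (by gcongr)

lemma abs_iteratedDeriv_comp_le {φ g : ℝ → ℝ} {n : ℕ} (hφ : ContDiff ℝ n φ) (hg : ContDiff ℝ n g)
    (x : ℝ) {C D : ℝ} (hC : ∀ i ≤ n, |iteratedDeriv i φ (g x)| ≤ C)
    (hD : ∀ i, 1 ≤ i → i ≤ n → |iteratedDeriv i g x| ≤ D ^ i) :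
    |iteratedDeriv n (φ ∘ g) x| ≤ n.factorial * C * D ^ n := by
  simp only [← Real.norm_eq_abs, ← norm_iteratedFDeriv_eq_norm_iteratedDeriv] at hC hD ⊢
  exact norm_iteratedFDeriv_comp_le hφ hg le_rfl x hC hD

lemma periodic_sub_id_of_map_add_one {f : ℝ → ℝ} (hf : ∀ x, f (x + 1) = f x + 1) :
    Periodic (fun x => f x - x) 1 := fun x => by
  simp only [hf x]
  ring

namespace IsCircleDiffeoLift

variable {f : ℝ → ℝ}

lemma contDiff (hf : IsCircleDiffeoLift f) (n : ℕ) : ContDiff ℝ n f :=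
  hf.1.of_le (by exact_mod_cast le_top)

lemma periodic_sub_id (hf : IsCircleDiffeoLift f) : Periodic (fun x => f x - x) 1 :=
  periodic_sub_id_of_map_add_one hf.2.1

lemma abs_iteratedDeriv_le_two_mul_liftNorm (hf : IsCircleDiffeoLift f) {r i : ℕ}
    (h1 : 1 ≤ i) (hi : i ≤ r) (x : ℝ) : |iteratedDeriv i f x| ≤ 2 * liftNorm r f := by
  have hsub : CrNorm r (fun x => f x - x) ≤ liftNorm r f :=
    (le_max_left _ _).trans (le_max_left _ _)
  have hone : 1 ≤ liftNorm r f := le_max_right _ _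
  calc |iteratedDeriv i f x| ≤ |iteratedDeriv i (fun y => f y - y) x| + 1 :=
        abs_iteratedDeriv_le_abs_iteratedDeriv_sub_id_add_one (hf.contDiff i) (by omega) x
    _ ≤ CrNorm r (fun x => f x - x) + 1 := by
        gcongr
        exact hf.periodic_sub_id.abs_iteratedDeriv_le_crNorm one_ne_zero
          ((hf.contDiff i).sub contDiff_id) hi x
    _ ≤ 2 * liftNorm r f := by linarith

end IsCircleDiffeoLift

/-- For every `r` there is `C = C(r) > 0` with `‖f ∘ g - g‖_r ≤ C ‖f - id‖_r |g|_r^r`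
for all lifts `f, g` of orientation-preserving smooth circle diffeomorphisms. -/
theorem stmt_10 (r : ℕ) :
    ∃ C : ℝ, 0 < C ∧ ∀ f g : ℝ → ℝ, IsCircleDiffeoLift f → IsCircleDiffeoLift g →
      CrNorm r (fun x => f (g x) - g x) ≤
        C * CrNorm r (fun x => f x - x) * liftNorm r g ^ r := by
  refine ⟨r.factorial * 2 ^ r, by positivity, fun f g hf hg => ?_⟩
  set φ : ℝ → ℝ := fun x => f x - x
  set L := liftNorm r g
  have hL1 : 1 ≤ L := le_max_right _ _
  have hL : 1 ≤ 2 * L := by linarith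
  have hφ (n : ℕ) : ContDiff ℝ n φ := (hf.contDiff n).sub contDiff_id
  have hφr := crNorm_nonneg r φ
  have hL0 : 0 ≤ L := zero_le_one.trans hL1
  refine crNorm_le (by positivity) fun n hn x => ?_
  calc |iteratedDeriv n (φ ∘ g) x| ≤ n.factorial * CrNorm r φ * (2 * L) ^ n :=
        abs_iteratedDeriv_comp_le (hφ n) (hg.contDiff n) x
          (fun i hi => hf.periodic_sub_id.abs_iteratedDeriv_le_crNorm one_ne_zero (hφ i)
            (hi.trans hn) _)
          (fun i h1 hi => (hg.abs_iteratedDeriv_le_two_mul_liftNorm h1 (hi.trans hn) x).trans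
            (le_self_pow₀ hL (by omega)))
    _ ≤ r.factorial * CrNorm r φ * (2 * L) ^ r := by gcongr
    _ = r.factorial * 2 ^ r * CrNorm r φ * L ^ r := by ring
end
end

section
/- Let (X, 𝓑, m) be a σ-finite measure space and let f : X → X be a bimeasurable bijection such that both f and f^{−1} are nonsingular with respect to m (the pushforward f_* m and m are mutually absolutely continuous), and suppose f is ergodic with respect to m (every measurable set A with f^{−1}(A) = A is m-null or m-conull). Let μ be a nonzero σ-finite f-invariant measure on (X, 𝓑) (f_* μ = μ) such that f is also ergodic with respect to μ. Then either μ and m are equivalent (mutually absolutely continuous), or μ and m are mutually singular. -/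
noncomputable section
open MeasureTheory Filter Topology

section Aux

variable {X : Type*} [MeasurableSpace X]

/-- The union of all forward and backward preimages of `A` under `f`/`finv`. -/
def orbUnion (f finv : X → X) (A : Set X) : Set X :=
  ⋃ n : ℕ, f^[n] ⁻¹' A ∪ finv^[n] ⁻¹' A

lemma subset_orbUnion (f finv : X → X) (A : Set X) : A ⊆ orbUnion f finv A := fun x hx =>
  Set.mem_iUnion.mpr ⟨0, Or.inl hx⟩

lemma measurableSet_orbUnion {f finv : X → X} (hmf : Measurable f) (hmfinv : Measurable finv)
    {A : Set X} (hA : MeasurableSet A) : MeasurableSet (orbUnion f finv A) :=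
  MeasurableSet.iUnion fun n => ((hmf.iterate n) hA).union ((hmfinv.iterate n) hA)

lemma preimage_orbUnion {f finv : X → X} (hli : Function.LeftInverse finv f) (A : Set X) :
    f ⁻¹' orbUnion f finv A = orbUnion f finv A := by
  ext x
  simp only [orbUnion, Set.mem_preimage, Set.mem_iUnion, Set.mem_union]
  constructor
  · rintro ⟨n, h | h⟩
    · exact ⟨n + 1, Or.inl (by rwa [Function.iterate_succ_apply])⟩
    · cases n with
      | zero => exact ⟨1, Or.inl (by simpa using h)⟩
      | succ k =>
        refine ⟨k, Or.inr ?_⟩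
        rwa [Function.iterate_succ_apply, hli x] at h
  · rintro ⟨n, h | h⟩
    · cases n with
      | zero => exact ⟨1, Or.inr (by simpa [hli x] using h)⟩
      | succ k => exact ⟨k, Or.inl (by rwa [Function.iterate_succ_apply] at h)⟩
    · exact ⟨n + 1, Or.inr (by rw [Function.iterate_succ_apply, hli x]; exact h)⟩

lemma orbUnion_null {m : Measure X} {f finv : X → X} (hmf : Measurable f)
    (hmfinv : Measurable finv) (h1 : Measure.map f m ≪ m) (h2 : Measure.map finv m ≪ m)
    {A : Set X} (hA : MeasurableSet A) (hA0 : m A = 0) : m (orbUnion f finv A) = 0 := by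
  have key : ∀ (g : X → X), Measurable g → Measure.map g m ≪ m →
      ∀ n : ℕ, m (g^[n] ⁻¹' A) = 0 := by
    intro g hg habs n
    induction n with
    | zero => simpa using hA0
    | succ k ih =>
      rw [Function.iterate_succ, Set.preimage_comp]
      calc m (g ⁻¹' (g^[k] ⁻¹' A))
          = Measure.map g m (g^[k] ⁻¹' A) :=
            (Measure.map_apply hg ((hg.iterate k) hA)).symm
        _ = 0 := habs ih
  exact measure_iUnion_null fun n =>
    measure_union_null (key f hmf h1 n) (key finv hmfinv h2 n)

end Aux

/-- If a bimeasurable nonsingular bijection `f` of a σ-finite measure space `(X, m)` is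
ergodic for `m`, and `μ` is a nonzero σ-finite `f`-invariant measure for which `f` is also
ergodic, then `μ` is either equivalent to `m` or mutually singular with `m`. -/
theorem stmt_16 {X : Type*} [MeasurableSpace X] (m : Measure X) [SigmaFinite m]
    (f finv : X → X) (hmf : Measurable f) (hmfinv : Measurable finv)
    (hli : Function.LeftInverse finv f) (hri : Function.RightInverse finv f)
    (hns : Measure.map f m ≪ m ∧ m ≪ Measure.map f m)
    (hns' : Measure.map finv m ≪ m ∧ m ≪ Measure.map finv m)
    (herg : ∀ A : Set X, MeasurableSet A → f ⁻¹' A = A → m A = 0 ∨ m Aᶜ = 0)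
    (μ : Measure X) (hμ0 : μ ≠ 0) [SigmaFinite μ]
    (hinv : Measure.map f μ = μ)
    (hergμ : ∀ A : Set X, MeasurableSet A → f ⁻¹' A = A → μ A = 0 ∨ μ Aᶜ = 0) :
    (μ ≪ m ∧ m ≪ μ) ∨ μ ⟂ₘ m := by
  by_cases hsing : μ ⟂ₘ m
  · exact Or.inr hsing
  have hmapfμ : Measure.map finv μ = μ := by
    rw [← hinv, Measure.map_map hmfinv hmf]
    have h : finv ∘ f = id := funext hli
    rw [h, Measure.map_id, hinv]
  have hμf : Measure.map f μ ≪ μ := by rw [hinv]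
  have hμfinv : Measure.map finv μ ≪ μ := by rw [hmapfμ]
  left
  constructor
  · refine Measure.AbsolutelyContinuous.mk fun s hs hms => ?_
    by_contra hμs
    have hTm : MeasurableSet (orbUnion f finv s) := measurableSet_orbUnion hmf hmfinv hs
    have hmT : m (orbUnion f finv s) = 0 := orbUnion_null hmf hmfinv hns.1 hns'.1 hs hms
    have hμT : μ (orbUnion f finv s) ≠ 0 := fun h =>
      hμs (measure_mono_null (subset_orbUnion f finv s) h)
    rcases hergμ _ hTm (preimage_orbUnion hli s) with h | h
    · exact hμT h
    · exact hsing ⟨(orbUnion f finv s)ᶜ, hTm.compl, h, by rwa [compl_compl]⟩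
  · refine Measure.AbsolutelyContinuous.mk fun s hs hμs => ?_
    by_contra hms
    have hTm : MeasurableSet (orbUnion f finv s) := measurableSet_orbUnion hmf hmfinv hs
    have hμT : μ (orbUnion f finv s) = 0 := orbUnion_null hmf hmfinv hμf hμfinv hs hμs
    have hmT : m (orbUnion f finv s) ≠ 0 := fun h =>
      hms (measure_mono_null (subset_orbUnion f finv s) h)
    rcases herg _ hTm (preimage_orbUnion hli s) with h | h
    · exact hmT h
    · exact hsing ⟨orbUnion f finv s, hTm, hμT, h⟩
end
end

section
/- Let f be an orientation-preserving C¹ diffeomorphism of the circle S¹ = ℝ/ℤ, let m be the Lebesgue (Haar) measure on S¹, let λ > 0, and let Ξ ⊆ S¹ be a Borel set with m(Ξ) > 0. Suppose that for every closed set K ⊆ Ξ with m(K) > 0 there exist a point ξ ∈ K and an integer i ∈ ℤ such that f^i(ξ) ∈ K and (f^i)'(ξ) = λ. Then for every Borel set A ⊆ Ξ with m(A) > 0 and every ε > 0 there exist a Borel set B ⊆ A with m(B) > 0 and an integer i ∈ ℤ such that f^i(B) ⊆ A and |(f^i)'(x) − λ| < ε for all x ∈ B. -/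
noncomputable section
open MeasureTheory Filter Topology

/-!
If every set `A ∩ f⁻ⁱ(A) ∩ {|(fⁱ)' - λ| < ε}` (`i ∈ ℤ`) were null, then removing their union
from `A` would leave a set of positive measure, hence (by inner regularity) a closed `K` of
positive measure inside it. The hypothesis yields `ξ ∈ K` and `i` with `fⁱ ξ ∈ K` and
`(fⁱ)'(ξ) = λ`, so `ξ` lies in the `i`-th removed set, a contradiction. Measurability of these
sets holds because `f` is monotone, its inverse is measurable by Lusin–Souslin, and derivatives
are always measurable.
-/

theorem Measurable.invFun_of_injective {α β : Type*} [MeasurableSpace α] [StandardBorelSpace α]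
    [MeasurableSpace β] [MeasurableSpace.CountablySeparated β] [Nonempty α] {f : α → β}
    (hf : Measurable f) (hinj : Function.Injective f) : Measurable (Function.invFun f) :=
  -- `Function.invFun f` is definitionally `Function.extend f id fun _ => Classical.arbitrary α`
  (hf.measurableEmbedding hinj).measurable_extend (g := id)
    (g' := fun _ => Classical.arbitrary α) measurable_id measurable_const

theorem measurable_zpowLift {f : ℝ → ℝ} (hf : Measurable f) (hinj : Function.Injective f)
    (i : ℤ) : Measurable (zpowLift f i) := by
  unfold zpowLift
  split
  · exact hf.iterate _
  · exact (hf.invFun_of_injective hinj).iterate _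

theorem exists_measure_pos_of_forall_isClosed_returns {X ι : Type*} [TopologicalSpace X]
    [MeasurableSpace X] [Countable ι] {μ : Measure X} [μ.WeaklyRegular]
    (T : ι → X → X) (G : ι → Set X) {A : Set X} (hA : MeasurableSet A) (hA_fin : μ A ≠ ⊤)
    (hA_pos : 0 < μ A)
    (hret : ∀ K ⊆ A, IsClosed K → 0 < μ K → ∃ ξ ∈ K, ∃ i, T i ξ ∈ K ∧ ξ ∈ G i) :
    ∃ i, 0 < μ (A ∩ T i ⁻¹' A ∩ G i) := by
  by_contra! hnull
  set N := toMeasurable μ (⋃ i, A ∩ T i ⁻¹' A ∩ G i)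
  have hN : μ N = 0 := by
    rw [measure_toMeasurable]
    exact measure_iUnion_null fun i => nonpos_iff_eq_zero.1 (hnull i)
  have hAN : μ (A \ N) = μ A := measure_sdiff_null hN
  obtain ⟨K, hKA, hK, hK_pos⟩ :=
    (hA.diff (measurableSet_toMeasurable _ _)).exists_lt_isClosed_of_ne_top
      (hAN ▸ hA_fin) (hAN ▸ hA_pos)
  obtain ⟨ξ, hξ, i, hTξ, hGξ⟩ := hret K (hKA.trans Set.sdiff_subset) hK hK_pos
  exact (hKA hξ).2 <| subset_toMeasurable _ _ <|
    Set.mem_iUnion.2 ⟨i, ⟨(hKA hξ).1, (hKA hTξ).1⟩, hGξ⟩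

theorem stmt_17_general (f : ℝ → ℝ) (hf : IsC1CircleLift f)
    (Fz : ℤ → UnitAddCircle → UnitAddCircle) (D : ℤ → UnitAddCircle → ℝ)
    (hFz : ∀ i : ℤ, ∀ x : ℝ, Fz i ↑x = ↑(zpowLift f i x))
    (hD : ∀ i : ℤ, ∀ x : ℝ, D i ↑x = deriv (zpowLift f i) x)
    (lam : ℝ)
    (Ξ : Set UnitAddCircle)
    (hyp : ∀ K : Set UnitAddCircle, K ⊆ Ξ → IsClosed K → 0 < volume K →
      ∃ ξ ∈ K, ∃ i : ℤ, Fz i ξ ∈ K ∧ D i ξ = lam) :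
    ∀ A : Set UnitAddCircle, A ⊆ Ξ → MeasurableSet A → 0 < volume A →
      ∀ ε : ℝ, 0 < ε →
        ∃ B : Set UnitAddCircle, MeasurableSet B ∧ B ⊆ A ∧ 0 < volume B ∧
          ∃ i : ℤ, Fz i '' B ⊆ A ∧ ∀ x ∈ B, |D i x - lam| < ε := by
  intro A hAΞ hA hA_pos ε hε
  have hf_mono : StrictMono f := strictMono_of_deriv_pos hf.2.2
  have hFz_meas (i : ℤ) : Measurable (Fz i) := by
    refine QuotientAddGroup.measurable_from_quotient.2 ?_
    rw [show Fz i ∘ (↑) = ((↑) : ℝ → UnitAddCircle) ∘ zpowLift f i from funext (hFz i)]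
    exact AddCircle.measurable_mk'.comp
      (measurable_zpowLift hf_mono.monotone.measurable hf_mono.injective i)
  have hD_meas (i : ℤ) : Measurable (D i) := by
    refine QuotientAddGroup.measurable_from_quotient.2 ?_
    rw [show D i ∘ (↑) = deriv (zpowLift f i) from funext (hD i)]
    exact measurable_deriv _
  obtain ⟨i, hi⟩ := exists_measure_pos_of_forall_isClosed_returns Fz
    (fun i => {x | |D i x - lam| < ε}) hA (measure_ne_top _ _) hA_pos
    fun K hKA hK hK_pos => by
      obtain ⟨ξ, hξ, i, hFξ, hDξ⟩ := hyp K (hKA.trans hAΞ) hK hK_pos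
      exact ⟨ξ, hξ, i, hFξ, by simpa [hDξ] using hε⟩
  refine ⟨_, ?_, fun x hx => hx.1.1, hi, i, ?_, fun x hx => hx.2⟩
  · exact (hA.inter (hFz_meas i hA)).inter
      (measurableSet_lt ((hD_meas i).sub_const lam).abs measurable_const)
  · rintro _ ⟨x, hx, rfl⟩
    exact hx.1.2

/-- If `f` is an orientation-preserving `C¹` circle diffeomorphism (given by a lift), `λ > 0`,
and `Ξ` is a Borel set of positive measure such that every closed `K ⊆ Ξ` of positive measure
contains a point `ξ` with `f^i(ξ) ∈ K` and `(f^i)'(ξ) = λ` for some `i ∈ ℤ`, then for every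
Borel `A ⊆ Ξ` of positive measure and every `ε > 0` there are a Borel `B ⊆ A` of positive
measure and `i ∈ ℤ` with `f^i(B) ⊆ A` and `|(f^i)'(x) - λ| < ε` for all `x ∈ B`. -/
theorem stmt_17 (f : ℝ → ℝ) (hf : IsC1CircleLift f)
    (Fz : ℤ → UnitAddCircle → UnitAddCircle) (D : ℤ → UnitAddCircle → ℝ)
    (hFz : ∀ i : ℤ, ∀ x : ℝ, Fz i ↑x = ↑(zpowLift f i x))
    (hD : ∀ i : ℤ, ∀ x : ℝ, D i ↑x = deriv (zpowLift f i) x)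
    (lam : ℝ) (hlam : 0 < lam)
    (Ξ : Set UnitAddCircle) (hΞmeas : MeasurableSet Ξ) (hΞpos : 0 < volume Ξ)
    (hyp : ∀ K : Set UnitAddCircle, K ⊆ Ξ → IsClosed K → 0 < volume K →
      ∃ ξ ∈ K, ∃ i : ℤ, Fz i ξ ∈ K ∧ D i ξ = lam) :
    ∀ A : Set UnitAddCircle, A ⊆ Ξ → MeasurableSet A → 0 < volume A →
      ∀ ε : ℝ, 0 < ε →
        ∃ B : Set UnitAddCircle, MeasurableSet B ∧ B ⊆ A ∧ 0 < volume B ∧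
          ∃ i : ℤ, Fz i '' B ⊆ A ∧ ∀ x ∈ B, |D i x - lam| < ε :=
  stmt_17_general f hf Fz D hFz hD lam Ξ hyp
end
end
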